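/- If two RLFTSs N and N′ are fluid trace equivalent, then for every natural number n the average potential fluid change volumes for paths of length n coincide: FluidChange_N(n) = FluidChange_{N′}(n), where FluidChange(n) = Σ over paths π of length n from the initial state of FluidChange(π)·PT(π) and FluidChange(π) = Σ_{i=0}^{n} SJ(Mᵢ)·RP(Mᵢ) summed over the states M₀,…,Mₙ visited by π. -/
import Mathlib


open scoped BigOperators

/-- A rated labeled fluid transition system (RLFTS) over a type `Act` of actions. -/
structure RLFTS (Act : Type) where
  S : Type
  E : Type
  s0 : S
  src : E → S
  tgt : E → S
  rate : E → ℝ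
  label : E → Act
  RP : S → ℝ
  rate_pos : ∀ e, 0 < rate e
  out_finite : ∀ s : S, {e : E | src e = s}.Finite
  out_nonempty : ∀ s : S, ∃ e : E, src e = s

namespace RLFTS

variable {Act : Type}

/-- Exit rate of a state. -/
noncomputable def RE (N : RLFTS Act) (s : N.S) : ℝ :=
  ∑ᶠ e ∈ {e : N.E | N.src e = s}, N.rate e

/-- Average sojourn time in a state. -/
noncomputable def SJ (N : RLFTS Act) (s : N.S) : ℝ := 1 / N.RE s

/-- Firing probability of an edge. -/
noncomputable def PTe (N : RLFTS Act) (e : N.E) : ℝ := N.rate e / N.RE (N.src e)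

/-- `IsPathFrom N M es` : the list of edges `es` is a path starting in the state `M`. -/
def IsPathFrom (N : RLFTS Act) : N.S → List N.E → Prop
  | _, [] => True
  | M, e :: es => N.src e = M ∧ IsPathFrom N (N.tgt e) es

/-- The list of states visited by a path starting in `M`. -/
def visits (N : RLFTS Act) : N.S → List N.E → List N.S
  | M, [] => [M]
  | M, e :: es => M :: visits N (N.tgt e) es

/-- Execution probability of a path. -/
noncomputable def pathPT (N : RLFTS Act) (es : List N.E) : ℝ := (es.map N.PTe).prod

/-- Cumulative execution probability of the `(σ,ς,ϱ)`-selected paths starting in `M`. -/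
noncomputable def PTsel (N : RLFTS Act) (M : N.S) (σ : List Act) (ς ϱ : List ℝ) : ℝ :=
  ∑ᶠ es ∈ {es : List N.E | IsPathFrom N M es ∧ es.map N.label = σ ∧
      (visits N M es).map N.SJ = ς ∧ (visits N M es).map N.RP = ϱ}, N.pathPT es

end RLFTS

namespace RLFTS

/-- The RLFTSs `N` and `N'` are fluid trace equivalent: the cumulative probabilities of the
`(σ,ς,ϱ)`-selected paths from the initial states coincide for every triple `(σ,ς,ϱ)` of lists
over `Act`, `ℝ_{>0}` and `ℝ`. -/
def FluidTraceEquiv {Act : Type} (N N' : RLFTS Act) : Prop :=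
  ∀ (σ : List Act) (ς ϱ : List ℝ), (∀ x ∈ ς, 0 < x) →
    N.PTsel N.s0 σ ς ϱ = N'.PTsel N'.s0 σ ς ϱ

end RLFTS

namespace RLFTS

variable {Act : Type}

/-- Average potential fluid change volume for a path starting in `M`: the sum of
`SJ(Mᵢ)·RP(Mᵢ)` over the visited states `M₀,…,Mₙ`. -/
noncomputable def fluidChangePath (N : RLFTS Act) (M : N.S) (es : List N.E) : ℝ :=
  ((visits N M es).map fun s => N.SJ s * N.RP s).sum

/-- Average potential fluid change volume for the paths of length `n` from the initial state. -/
noncomputable def fluidChange (N : RLFTS Act) (n : ℕ) : ℝ :=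
  ∑ᶠ es ∈ {es : List N.E | IsPathFrom N N.s0 es ∧ es.length = n},
    fluidChangePath N N.s0 es * N.pathPT es

end RLFTS

namespace RLFTS

variable {Act : Type}

open scoped Classical

lemma RE_pos' (N : RLFTS Act) (s : N.S) : 0 < N.RE s := by
  obtain ⟨e, he⟩ := N.out_nonempty s
  have hf := N.out_finite s
  rw [RE, ← Set.Finite.coe_toFinset hf, finsum_mem_coe_finset]
  apply Finset.sum_pos
  · intro i _; exact N.rate_pos i
  · exact ⟨e, hf.mem_toFinset.mpr he⟩

lemma SJ_pos' (N : RLFTS Act) (s : N.S) : 0 < N.SJ s :=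
  one_div_pos.mpr (RE_pos' N s)

lemma paths_finite (N : RLFTS Act) : ∀ (n : ℕ) (M : N.S),
    {es : List N.E | IsPathFrom N M es ∧ es.length = n}.Finite := by
  intro n
  induction n with
  | zero =>
    intro M
    apply Set.Finite.subset (Set.finite_singleton ([] : List N.E))
    rintro es ⟨_, hlen⟩
    simp [List.length_eq_zero_iff.mp hlen]
  | succ n ih =>
    intro M
    apply Set.Finite.subset
      (Set.Finite.biUnion (N.out_finite M) (fun e _ =>
        ((ih (N.tgt e)).image (fun es => e :: es))))
    rintro es ⟨hp, hlen⟩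
    cases es with
    | nil => simp at hlen
    | cons e es' =>
      obtain ⟨hsrc, hp'⟩ := hp
      exact Set.mem_biUnion hsrc ⟨es', ⟨hp', by simpa using hlen⟩, rfl⟩

/-- Pairwise product value of two lists. -/
noncomputable def fcVal (ς ϱ : List ℝ) : ℝ := (List.zipWith (· * ·) ς ϱ).sum

lemma fluidChangePath_eq_val (N : RLFTS Act) (M : N.S) (es : List N.E) :
    fluidChangePath N M es = fcVal ((visits N M es).map N.SJ) ((visits N M es).map N.RP) := by
  rw [fluidChangePath, fcVal]
  induction (visits N M es) with
  | nil => simp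
  | cons a l ih => simp [ih]

/-- The trace triple of a path. -/
noncomputable def trip (N : RLFTS Act) (M : N.S) (es : List N.E) : List Act × List ℝ × List ℝ :=
  (es.map N.label, (visits N M es).map N.SJ, (visits N M es).map N.RP)

lemma PTsel_eq_sum' (N : RLFTS Act) (n : ℕ) (σ : List Act) (ς ϱ : List ℝ)
    (hσ : σ.length = n) :
    N.PTsel N.s0 σ ς ϱ =
      ∑ es ∈ ((paths_finite N n N.s0).toFinset.filter
        (fun es => trip N N.s0 es = (σ, ς, ϱ))), N.pathPT es := by
  have hset : {es : List N.E | IsPathFrom N N.s0 es ∧ es.map N.label = σ ∧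
      (visits N N.s0 es).map N.SJ = ς ∧ (visits N N.s0 es).map N.RP = ϱ} =
      ↑((paths_finite N n N.s0).toFinset.filter
        (fun es => trip N N.s0 es = (σ, ς, ϱ))) := by
    ext es
    simp only [Set.mem_setOf_eq, Finset.coe_filter, Set.Finite.mem_toFinset, trip,
      Prod.mk.injEq]
    constructor
    · rintro ⟨hp, h1, h2, h3⟩
      exact ⟨⟨hp, by rw [← hσ, ← h1, List.length_map]⟩, h1, h2, h3⟩
    · rintro ⟨⟨hp, _⟩, h1, h2, h3⟩
      exact ⟨hp, h1, h2, h3⟩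
  rw [PTsel, hset, finsum_mem_coe_finset]

lemma key' (N : RLFTS Act) (n : ℕ) (t : List Act × List ℝ × List ℝ)
    (ht : t.1.length = n) :
    fcVal t.2.1 t.2.2 * N.PTsel N.s0 t.1 t.2.1 t.2.2 =
      ∑ es ∈ ((paths_finite N n N.s0).toFinset.filter (fun es => trip N N.s0 es = t)),
        fluidChangePath N N.s0 es * N.pathPT es := by
  obtain ⟨σ, ς, ϱ⟩ := t
  rw [PTsel_eq_sum' N n σ ς ϱ ht, Finset.mul_sum]
  apply Finset.sum_congr rfl
  intro es hes
  simp only [Finset.mem_filter] at hes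
  have h2 := hes.2
  simp only [trip, Prod.mk.injEq] at h2
  rw [fluidChangePath_eq_val, h2.2.1, h2.2.2]

lemma fluidChange_eq_sum (N : RLFTS Act) (n : ℕ)
    (U : Finset (List Act × List ℝ × List ℝ))
    (hU : ∀ es ∈ (paths_finite N n N.s0).toFinset, trip N N.s0 es ∈ U)
    (hlen : ∀ t ∈ U, t.1.length = n) :
    fluidChange N n = ∑ t ∈ U, fcVal t.2.1 t.2.2 * N.PTsel N.s0 t.1 t.2.1 t.2.2 := by
  rw [fluidChange, ← Set.Finite.coe_toFinset (paths_finite N n N.s0), finsum_mem_coe_finset,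
    ← Finset.sum_fiberwise_of_maps_to hU (fun es => fluidChangePath N N.s0 es * N.pathPT es)]
  exact Finset.sum_congr rfl fun t htU => (key' N n t (hlen t htU)).symm

end RLFTS

/-- Fluid trace equivalence preserves the average potential fluid change volume for the
paths of every given length. -/
theorem RLFTS.fluidTraceEquiv_fluidChange_eq {Act : Type} (N N' : RLFTS Act)
    (h : RLFTS.FluidTraceEquiv N N') (n : ℕ) :
    RLFTS.fluidChange N n = RLFTS.fluidChange N' n := by
  classical
  set U := (RLFTS.paths_finite N n N.s0).toFinset.image (RLFTS.trip N N.s0) ∪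
    (RLFTS.paths_finite N' n N'.s0).toFinset.image (RLFTS.trip N' N'.s0) with hUdef
  have hlen : ∀ t ∈ U, t.1.length = n := by
    intro t ht
    rcases Finset.mem_union.mp ht with hmem | hmem <;>
    · obtain ⟨es, hes, rfl⟩ := Finset.mem_image.mp hmem
      have hes' := (Set.Finite.mem_toFinset _).mp hes
      simp [RLFTS.trip, hes'.2]
  have hpos : ∀ t ∈ U, ∀ x ∈ t.2.1, 0 < x := by
    intro t ht x hx
    rcases Finset.mem_union.mp ht with hmem | hmem <;>
    · obtain ⟨es, hes, rfl⟩ := Finset.mem_image.mp hmem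
      obtain ⟨s, _, rfl⟩ := List.mem_map.mp hx
      exact RLFTS.SJ_pos' _ s
  rw [RLFTS.fluidChange_eq_sum N n U
      (fun es hes => Finset.mem_union_left _ (Finset.mem_image_of_mem _ hes)) hlen,
    RLFTS.fluidChange_eq_sum N' n U
      (fun es hes => Finset.mem_union_right _ (Finset.mem_image_of_mem _ hes)) hlen]
  exact Finset.sum_congr rfl fun t ht => by
    rw [h t.1 t.2.1 t.2.2 (hpos t ht)]
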